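/- Let G and H be finite simple graphs and k ≥ 2 an integer. If G is regular with degree at least 1, H is regular with degree at least 1, and both G and H admit neighborhood-balanced k-colorings, then the join G + H admits a neighborhood-balanced k-coloring. -/

import Mathlib

open SimpleGraph

/-- A neighborhood-balanced `k`-coloring of a simple graph `G` is a vertex coloring
`c : V → Fin k` such that every vertex has an equal number of neighbors of each color. -/
def IsNBC {V : Type*} (G : SimpleGraph V) (k : ℕ) (c : V → Fin k) : Prop :=
  ∀ v : V, ∀ i j : Fin k,
    {u | G.Adj v u ∧ c u = i}.ncard = {u | G.Adj v u ∧ c u = j}.ncard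


/-- The join `G + H` of simple graphs: disjoint union plus all cross edges. -/
def joinGraph {V W : Type*} (G : SimpleGraph V) (H : SimpleGraph W) :
    SimpleGraph (V ⊕ W) where
  Adj x y := match x, y with
    | Sum.inl a, Sum.inl b => G.Adj a b
    | Sum.inr a, Sum.inr b => H.Adj a b
    | Sum.inl _, Sum.inr _ => True
    | Sum.inr _, Sum.inl _ => True
  symm := by
    constructor
    rintro (a | a) (b | b) h
    · exact G.adj_symm h
    · trivial
    · trivial
    · exact H.adj_symm h
  loopless := by
    constructor
    rintro (a | a) h
    · exact G.irrefl h
    · exact H.irrefl h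

/-!
In a regular graph of positive degree `r`, counting the edges from all vertices into the
colour class `c⁻¹ {i}` gives `r * |c⁻¹ {i}|`; for a neighborhood-balanced colouring this sum does
not depend on `i`, so all colour classes have the same size. Hence the two colourings side by
side colour the join: a vertex of `G` sees its balanced `G`-neighbourhood plus all of `H`, whose
colour classes are equal, and symmetrically for `H`.
-/

section ColorClass

variable {V α : Type*} [Fintype V] (G : SimpleGraph V) [DecidableRel G.Adj]

lemma SimpleGraph.sum_ncard_adj_color_eq {r : ℕ} (hreg : G.IsRegularOfDegree r)
    (c : V → α) (i : α) :
    ∑ v, {u | G.Adj v u ∧ c u = i}.ncard = r * {u | c u = i}.ncard := by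
  classical
  have hdc := Finset.sum_card_bipartiteAbove_eq_sum_card_bipartiteBelow G.Adj
    (s := Finset.univ) (t := {u | c u = i})
  have habove : ∀ v, {u | G.Adj v u ∧ c u = i}.ncard
      = (({u | c u = i} : Finset V).bipartiteAbove G.Adj v).card := by
    intro v
    rw [← Set.ncard_coe_finset, Finset.coe_bipartiteAbove]
    simp only [Finset.mem_filter, Finset.mem_univ, true_and, and_comm]
  have hbelow : ∀ u, (Finset.univ.bipartiteBelow G.Adj u).card = r := by
    intro u
    rw [← hreg u, ← card_neighborFinset_eq_degree]
    congr 1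
    ext v
    simp [adj_comm]
  simp only [habove, hdc, hbelow, Finset.sum_const, smul_eq_mul, mul_comm]
  rw [← Set.ncard_coe_finset, Finset.coe_filter]
  simp

variable {G}

lemma IsNBC.ncard_color_eq {k r : ℕ} (hr : 1 ≤ r) (hreg : G.IsRegularOfDegree r)
    {c : V → Fin k} (hc : IsNBC G k c) (i j : Fin k) :
    {u | c u = i}.ncard = {u | c u = j}.ncard := by
  refine Nat.eq_of_mul_eq_mul_left hr ?_
  rw [← G.sum_ncard_adj_color_eq hreg, ← G.sum_ncard_adj_color_eq hreg]
  exact Finset.sum_congr rfl fun v _ => hc v i j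

end ColorClass

section Join

variable {V W α : Type*} [Finite V] [Finite W] (G : SimpleGraph V) (H : SimpleGraph W)
  (cG : V → α) (cH : W → α)

lemma joinGraph_ncard_adj_inl_color (a : V) (i : α) :
    {u | (joinGraph G H).Adj (Sum.inl a) u ∧ Sum.elim cG cH u = i}.ncard
      = {b | G.Adj a b ∧ cG b = i}.ncard + {w | cH w = i}.ncard := by
  have hs : {u | (joinGraph G H).Adj (Sum.inl a) u ∧ Sum.elim cG cH u = i}
      = Sum.inl '' {b | G.Adj a b ∧ cG b = i} ∪ Sum.inr '' {w | cH w = i} := by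
    ext (b | w) <;> simp [joinGraph]
  rw [hs, Set.ncard_union_eq (Set.isCompl_range_inl_range_inr.disjoint.mono
      (Set.image_subset_range _ _) (Set.image_subset_range _ _)),
    Set.ncard_image_of_injective _ Sum.inl_injective,
    Set.ncard_image_of_injective _ Sum.inr_injective]

lemma joinGraph_ncard_adj_inr_color (a : W) (i : α) :
    {u | (joinGraph G H).Adj (Sum.inr a) u ∧ Sum.elim cG cH u = i}.ncard
      = {w | H.Adj a w ∧ cH w = i}.ncard + {b | cG b = i}.ncard := by
  have hs : {u | (joinGraph G H).Adj (Sum.inr a) u ∧ Sum.elim cG cH u = i}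
      = Sum.inr '' {w | H.Adj a w ∧ cH w = i} ∪ Sum.inl '' {b | cG b = i} := by
    ext (b | w) <;> simp [joinGraph]
  rw [hs, Set.ncard_union_eq (Set.isCompl_range_inl_range_inr.symm.disjoint.mono
      (Set.image_subset_range _ _) (Set.image_subset_range _ _)),
    Set.ncard_image_of_injective _ Sum.inl_injective,
    Set.ncard_image_of_injective _ Sum.inr_injective]

variable {G H}

lemma IsNBC.joinGraph {k : ℕ} {cG : V → Fin k} {cH : W → Fin k}
    (hcG : IsNBC G k cG) (hcH : IsNBC H k cH)
    (hG : ∀ i j, {u | cG u = i}.ncard = {u | cG u = j}.ncard)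
    (hH : ∀ i j, {u | cH u = i}.ncard = {u | cH u = j}.ncard) :
    IsNBC (joinGraph G H) k (Sum.elim cG cH) := by
  rintro (a | a) i j
  · rw [joinGraph_ncard_adj_inl_color, joinGraph_ncard_adj_inl_color, hcG a i j, hH i j]
  · rw [joinGraph_ncard_adj_inr_color, joinGraph_ncard_adj_inr_color, hcH a i j, hG i j]

end Join

theorem stmt_12_general {V W : Type*} [Fintype V] [Fintype W]
    (G : SimpleGraph V) (H : SimpleGraph W) [DecidableRel G.Adj] [DecidableRel H.Adj]
    (k : ℕ) (rG rH : ℕ) (hrG : 1 ≤ rG) (hrH : 1 ≤ rH)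
    (hGreg : G.IsRegularOfDegree rG) (hHreg : H.IsRegularOfDegree rH)
    (hG : ∃ c : V → Fin k, IsNBC G k c) (hH : ∃ c : W → Fin k, IsNBC H k c) :
    ∃ c : V ⊕ W → Fin k, IsNBC (joinGraph G H) k c := by
  obtain ⟨cG, hcG⟩ := hG
  obtain ⟨cH, hcH⟩ := hH
  exact ⟨Sum.elim cG cH, hcG.joinGraph hcH (hcG.ncard_color_eq hrG hGreg)
    (hcH.ncard_color_eq hrH hHreg)⟩

theorem stmt_12 {V W : Type*} [Fintype V] [Fintype W]
    (G : SimpleGraph V) (H : SimpleGraph W) [DecidableRel G.Adj] [DecidableRel H.Adj]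
    (k : ℕ) (hk : 2 ≤ k) (rG rH : ℕ) (hrG : 1 ≤ rG) (hrH : 1 ≤ rH)
    (hGreg : G.IsRegularOfDegree rG) (hHreg : H.IsRegularOfDegree rH)
    (hG : ∃ c : V → Fin k, IsNBC G k c) (hH : ∃ c : W → Fin k, IsNBC H k c) :
    ∃ c : V ⊕ W → Fin k, IsNBC (joinGraph G H) k c :=
  stmt_12_general G H k rG rH hrG hrH hGreg hHreg hG hH
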